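/- For n ≥ 4, the cycle C_n has strictly smaller distance α-spectral radius than the broom B_{n,3}: μ_α(C_n) < μ_α(B_{n,3}). -/

import Mathlib

open Finset Matrix

namespace DistAlpha

variable {V : Type*} [Fintype V] [DecidableEq V]

/-- The distance matrix of a graph, with real entries. -/
noncomputable def distMatrix (G : SimpleGraph V) : Matrix V V ℝ :=
  fun u v => (G.dist u v : ℝ)

/-- The transmission of a vertex: the sum of distances to all vertices. -/
noncomputable def transmission (G : SimpleGraph V) (u : V) : ℝ :=
  ∑ v, (G.dist u v : ℝ)

/-- The matrix `D_α = α T + (1-α) D`. -/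
noncomputable def Dalpha (G : SimpleGraph V) (α : ℝ) : Matrix V V ℝ :=
  α • Matrix.diagonal (transmission G) + (1 - α) • distMatrix G

/-- The distance α-spectral radius: the largest (real) eigenvalue of `D_α`. -/
noncomputable def muAlpha (G : SimpleGraph V) (α : ℝ) : ℝ :=
  sSup (spectrum ℝ (Dalpha G α))

/-- The transmission of a graph: sum of distances over unordered pairs. -/
noncomputable def sigma (G : SimpleGraph V) : ℝ :=
  (∑ u, ∑ v, (G.dist u v : ℝ)) / 2

/-- A graph is transmission regular if all vertex transmissions are equal. -/
def TransmissionRegular (G : SimpleGraph V) : Prop :=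
  ∀ u v : V, transmission G u = transmission G v

/-- The broom `B_{n,3}`: the path `0 - 1 - ⋯ - (n-3)` with two pendant vertices `n-2` and
`n-1` attached to the end vertex `n-3`. -/
def broom (n : ℕ) : SimpleGraph (Fin n) :=
  SimpleGraph.fromRel (fun u v =>
    (u.val + 1 = v.val ∧ v.val ≤ n - 3) ∨
    (u.val = n - 3 ∧ (v.val = n - 2 ∨ v.val = n - 1)))

/-! ### Auxiliary elementary counting lemmas -/

/-- `|a - b|` over `ℕ`. -/
def nabs (a b : ℕ) : ℕ := (a - b) + (b - a)

/-- `∑_{k<n} min k (n-k)`, an upper bound for the cycle transmission. -/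
def S (n : ℕ) : ℕ := ∑ k ∈ range n, min k (n - k)

lemma S_step (n : ℕ) : S (n + 2) = S n + (n + 1) := by
  rw [S, Finset.sum_range_succ']
  have h1 : ∀ k ∈ range (n+1), min (k+1) (n + 2 - (k+1)) = min k (n - k) + 1 := by
    intro k hk; simp only [mem_range] at hk; omega
  rw [Finset.sum_congr rfl h1, Finset.sum_add_distrib, Finset.sum_const,
    Finset.card_range, smul_eq_mul, mul_one, Finset.sum_range_succ]
  simp [S]

lemma S_le : ∀ n, 4 * S n ≤ n * n
  | 0 => by simp [S]
  | 1 => by simp [S]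
  | (n+2) => by
      have h := S_le n
      rw [S_step]
      nlinarith

/-- `∑_{i<n} ∑_{j<n} |i-j|`. -/
def Aabs (n : ℕ) : ℕ := ∑ i ∈ range n, ∑ j ∈ range n, nabs i j

lemma sum_rev : ∀ n : ℕ, 2 * ∑ i ∈ range n, (n - i) = n * (n + 1)
  | 0 => by simp
  | (n+1) => by
      have ih := sum_rev n
      rw [Finset.sum_range_succ]
      have h1 : ∀ i ∈ range n, (n + 1 - i) = (n - i) + 1 := by
        intro i hi; simp only [mem_range] at hi; omega
      rw [Finset.sum_congr rfl h1, Finset.sum_add_distrib, Finset.sum_const,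
        Finset.card_range, smul_eq_mul, mul_one]
      have e : n + 1 - n = 1 := by omega
      rw [e]; nlinarith

lemma Aabs_succ (n : ℕ) : Aabs (n + 1) = Aabs n + n * (n + 1) := by
  have inner : ∀ i, ∑ j ∈ range (n+1), nabs i j = (∑ j ∈ range n, nabs i j) + nabs i n :=
    fun i => Finset.sum_range_succ _ _
  rw [Aabs, Finset.sum_range_succ, Finset.sum_congr rfl (fun i _ => inner i),
    Finset.sum_add_distrib, inner n]
  have h2 : ∑ i ∈ range n, nabs i n = ∑ i ∈ range n, (n - i) := by
    apply Finset.sum_congr rfl; intro i hi; simp only [mem_range] at hi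
    simp only [nabs]; omega
  have h3 : ∑ j ∈ range n, nabs n j = ∑ j ∈ range n, (n - j) := by
    apply Finset.sum_congr rfl; intro j hj; simp only [mem_range] at hj
    simp only [nabs]; omega
  have h5 : nabs n n = 0 := by simp [nabs]
  rw [h2, h3, h5]
  have h4 := sum_rev n
  rw [Aabs]
  nlinarith

lemma Aabs_three : ∀ n : ℕ, 3 * Aabs (n + 1) = n * (n + 1) * (n + 2)
  | 0 => by simp [Aabs, nabs]
  | (n+1) => by
      have ih := Aabs_three n
      rw [Aabs_succ, Nat.mul_add, ih]
      ring

lemma key_broom (m sb : ℕ) (h1 : Aabs (m+4) + 4 ≤ sb + 2*(m+3)) :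
    (m+4)*(m+4)*(m+4) < 4 * sb := by
  have h3 : 3 * Aabs (m+4) = (m+3)*(m+4)*(m+5) := Aabs_three (m+3)
  nlinarith [h1, h3]

lemma key_cycle (m sb : ℕ) (h : (m+4)*(m+4)*(m+4) < 4 * sb) :
    (m+4) * S (m+4) < sb := by
  have h1 : 4 * ((m+4) * S (m+4)) ≤ (m+4)*(m+4)*(m+4) := by
    have hs := S_le (m+4)
    calc 4 * ((m+4) * S (m+4)) = (m+4) * (4 * S (m+4)) := by ring
    _ ≤ (m+4) * ((m+4)*(m+4)) := Nat.mul_le_mul_left _ hs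
    _ = (m+4)*(m+4)*(m+4) := by ring
  omega

/-! ### Spectral auxiliary lemmas -/

/-- Gershgorin-type bound: any real spectral value of an entrywise-nonnegative
matrix is at most the maximal row sum. -/
lemma spectrum_le_rowsum {N : Type*} [Fintype N] [DecidableEq N]
    (A : Matrix N N ℝ) (h0 : ∀ i j, 0 ≤ A i j) {R : ℝ}
    (hR : ∀ i, ∑ j, A i j ≤ R) {μ : ℝ} (hμ : μ ∈ spectrum ℝ A) : μ ≤ R := by
  rw [spectrum.mem_iff] at hμ
  rw [Matrix.isUnit_iff_isUnit_det, isUnit_iff_ne_zero, not_not] at hμ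
  obtain ⟨v, hv, hveq⟩ := (Matrix.exists_mulVec_eq_zero_iff).mpr hμ
  have hAv : A *ᵥ v = μ • v := by
    have h1 : (algebraMap ℝ (Matrix N N ℝ) μ) *ᵥ v = μ • v := by
      simp [Algebra.algebraMap_eq_smul_one, Matrix.smul_mulVec]
    have := congrArg (fun w => w + A *ᵥ v) hveq
    simpa [Matrix.sub_mulVec, sub_add_cancel, h1] using this.symm
  obtain ⟨j, hvj⟩ := Function.ne_iff.mp hv
  have hne : (Finset.univ : Finset N).Nonempty := ⟨j, Finset.mem_univ j⟩
  obtain ⟨i, -, hi⟩ := Finset.exists_max_image Finset.univ (fun i => |v i|) hne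
  have hvi : 0 < |v i| := lt_of_lt_of_le (abs_pos.mpr hvj) (hi j (Finset.mem_univ j))
  have hrow : μ * v i = ∑ k, A i k * v k := by
    have := congrFun hAv i
    simpa [Matrix.mulVec, dotProduct, mul_comm] using this.symm
  have habs : |μ| * |v i| ≤ R * |v i| := by
    calc |μ| * |v i| = |μ * v i| := (abs_mul μ (v i)).symm
    _ = |∑ k, A i k * v k| := by rw [hrow]
    _ ≤ ∑ k, |A i k * v k| := Finset.abs_sum_le_sum_abs _ _
    _ ≤ ∑ k, A i k * |v i| := by
        apply Finset.sum_le_sum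
        intro k _
        rw [abs_mul, abs_of_nonneg (h0 i k)]
        exact mul_le_mul_of_nonneg_left (hi k (Finset.mem_univ k)) (h0 i k)
    _ = (∑ k, A i k) * |v i| := by rw [Finset.sum_mul]
    _ ≤ R * |v i| := mul_le_mul_of_nonneg_right (hR i) (abs_nonneg _)
  have : |μ| ≤ R := le_of_mul_le_mul_right habs hvi
  exact (le_abs_self μ).trans this

/-- Rayleigh-quotient lower bound: there is a spectral value at least `r`
whenever some nonzero vector has Rayleigh quotient at least `r`. -/
lemma exists_spectrum_ge {N : Type*} [Fintype N] [DecidableEq N]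
    (A : Matrix N N ℝ) (hA : A.IsHermitian) (x : N → ℝ) (hx : x ≠ 0) (r : ℝ)
    (h : r * (x ⬝ᵥ x) ≤ x ⬝ᵥ (A *ᵥ x)) : ∃ μ ∈ spectrum ℝ A, r ≤ μ := by
  by_contra hc
  push_neg at hc
  have hev : ∀ i, hA.eigenvalues i < r := fun i =>
    hc _ (hA.eigenvalues_mem_spectrum_real i)
  set U : Matrix N N ℝ := (hA.eigenvectorUnitary : Matrix N N ℝ) with hU
  have hUU : U * star U = 1 := (Matrix.mem_unitaryGroup_iff).mp hA.eigenvectorUnitary.2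
  set c : N → ℝ := (star U) *ᵥ x with hc'
  have hdot : ∀ w : N → ℝ, x ⬝ᵥ (U *ᵥ w) = c ⬝ᵥ w := by
    intro w
    rw [Matrix.dotProduct_mulVec, hc']
    congr 1
    ext k
    rw [Matrix.vecMul, Matrix.mulVec]
    simp [dotProduct, star, Matrix.conjTranspose_apply, mul_comm]
  have hUc : U *ᵥ c = x := by
    rw [hc', Matrix.mulVec_mulVec, hUU, Matrix.one_mulVec]
  have hcc : c ⬝ᵥ c = x ⬝ᵥ x := by
    rw [← hdot c, hUc]
  have hxAx : x ⬝ᵥ (A *ᵥ x) = ∑ i, hA.eigenvalues i * (c i * c i) := by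
    conv_lhs => rw [hA.spectral_theorem, Unitary.conjStarAlgAut_apply]
    rw [← Matrix.mulVec_mulVec, ← Matrix.mulVec_mulVec, hdot]
    simp [dotProduct, Matrix.mulVec_diagonal, RCLike.ofReal_real_eq_id]
    ring_nf
    apply Finset.sum_congr rfl
    intro i _
    ring
  have hcne : c ≠ 0 := by
    intro h0
    apply hx
    have : x ⬝ᵥ x = 0 := by rw [← hcc, h0]; simp
    exact dotProduct_self_eq_zero.mp this
  obtain ⟨i0, hi0⟩ := Function.ne_iff.mp hcne
  have hlt : ∑ i, hA.eigenvalues i * (c i * c i) < r * (c ⬝ᵥ c) := by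
    rw [dotProduct, Finset.mul_sum]
    apply Finset.sum_lt_sum
    · intro i _
      exact mul_le_mul_of_nonneg_right (hev i).le (mul_self_nonneg (c i))
    · exact ⟨i0, Finset.mem_univ i0,
        mul_lt_mul_of_pos_right (hev i0) (mul_self_pos.mpr hi0)⟩
  rw [hxAx] at h
  rw [hcc] at hlt
  linarith

/-! ### Cycle distance bounds -/

open Fin.NatCast Fin.CommRing in
lemma cycle_adj_succ (m : ℕ) (x : Fin (m + 4)) :
    (SimpleGraph.cycleGraph (m + 4)).Adj x (x + 1) := by
  have h : (SimpleGraph.cycleGraph (m + 2 + 2)).Adj x (x + 1) :=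
    SimpleGraph.cycleGraph_adj.mpr (Or.inr (by ring))
  exact h

open Fin.NatCast Fin.CommRing in
lemma cycle_adj_pred (m : ℕ) (x : Fin (m + 4)) :
    (SimpleGraph.cycleGraph (m + 4)).Adj x (x - 1) := by
  have h : (SimpleGraph.cycleGraph (m + 2 + 2)).Adj x (x - 1) :=
    SimpleGraph.cycleGraph_adj.mpr (Or.inl (by ring))
  exact h

open Fin.NatCast Fin.CommRing in
lemma cycle_walk_add (m : ℕ) (u : Fin (m + 4)) :
    ∀ k : ℕ, ∃ w : (SimpleGraph.cycleGraph (m + 4)).Walk u (u + (k : Fin (m + 4))),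
      w.length = k := by
  intro k
  induction k with
  | zero => exact ⟨SimpleGraph.Walk.nil.copy rfl (by simp), by simp⟩
  | succ k ih =>
      obtain ⟨w, hw⟩ := ih
      have e : u + ((k : Fin (m + 4)) + 1) = u + (((k + 1 : ℕ) : Fin (m + 4))) := by
        push_cast; ring
      exact ⟨((w.concat (cycle_adj_succ m _)).copy rfl (by rw [add_assoc, e])),
        by simp [hw]⟩

open Fin.NatCast Fin.CommRing in
lemma cycle_walk_sub (m : ℕ) (u : Fin (m + 4)) :
    ∀ k : ℕ, ∃ w : (SimpleGraph.cycleGraph (m + 4)).Walk u (u - (k : Fin (m + 4))),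
      w.length = k := by
  intro k
  induction k with
  | zero => exact ⟨SimpleGraph.Walk.nil.copy rfl (by simp), by simp⟩
  | succ k ih =>
      obtain ⟨w, hw⟩ := ih
      have e : u - (k : Fin (m + 4)) - 1 = u - (((k + 1 : ℕ) : Fin (m + 4))) := by
        push_cast; ring
      exact ⟨((w.concat (cycle_adj_pred m _)).copy rfl e), by simp [hw]⟩

open Fin.NatCast Fin.CommRing in
lemma cycle_dist_le (m : ℕ) (u : Fin (m + 4)) (k : ℕ) (hk : k < m + 4) :
    (SimpleGraph.cycleGraph (m + 4)).dist u (u + (k : Fin (m + 4))) ≤ min k (m + 4 - k) := by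
  apply le_min
  · obtain ⟨w, hw⟩ := cycle_walk_add m u k
    have := SimpleGraph.dist_le w
    omega
  · have e : u + (k : Fin (m + 4)) = u - (((m + 4 - k : ℕ) : Fin (m + 4))) := by
      have h1 : ((k : ℕ) : Fin (m + 4)) + ((m + 4 - k : ℕ) : Fin (m + 4)) = 0 := by
        rw [← Nat.cast_add]
        have : k + (m + 4 - k) = m + 4 := by omega
        rw [this]
        exact Fin.natCast_self (m + 4)
      have h2 : ((k : ℕ) : Fin (m + 4)) = -((m + 4 - k : ℕ) : Fin (m + 4)) :=
        eq_neg_of_add_eq_zero_left h1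
      rw [h2, sub_eq_add_neg]
    rw [e]
    obtain ⟨w, hw⟩ := cycle_walk_sub m u (m + 4 - k)
    have := SimpleGraph.dist_le w
    omega

open Fin.NatCast Fin.CommRing in
lemma cycle_trans_le (m : ℕ) (u : Fin (m + 4)) :
    ∑ v : Fin (m + 4), (SimpleGraph.cycleGraph (m + 4)).dist u v ≤ S (m + 4) := by
  have h1 : ∑ v : Fin (m + 4), (SimpleGraph.cycleGraph (m + 4)).dist u v
      = ∑ v : Fin (m + 4), (SimpleGraph.cycleGraph (m + 4)).dist u (u + v) :=
    (Equiv.sum_comp (Equiv.addLeft u) fun v => (SimpleGraph.cycleGraph (m + 4)).dist u v).symm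
  have h2 : ∑ v : Fin (m + 4), (SimpleGraph.cycleGraph (m + 4)).dist u (u + v)
      = ∑ k ∈ range (m + 4), (SimpleGraph.cycleGraph (m + 4)).dist u (u + (k : Fin (m + 4))) := by
    rw [← Fin.sum_univ_eq_sum_range (fun k => (SimpleGraph.cycleGraph (m + 4)).dist u
      (u + (k : Fin (m + 4)))) (m + 4)]
    apply Finset.sum_congr rfl
    intro v _
    congr
    exact (Fin.cast_val_eq_self v).symm
  rw [h1, h2, S]
  apply Finset.sum_le_sum
  intro k hk
  exact cycle_dist_le m u k (mem_range.mp hk)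

/-! ### Broom distance bounds -/

/-- Potential function for the broom lower bound. -/
def fB (m : ℕ) (v : Fin (m + 4)) : ℕ := min v.val (m + 2)

lemma broom_adj_lip (m : ℕ) {u v : Fin (m + 4)} (h : (broom (m + 4)).Adj u v) :
    nabs (fB m u) (fB m v) ≤ 1 := by
  simp only [broom, SimpleGraph.fromRel_adj] at h
  obtain ⟨-, h | h⟩ := h <;>
  · have hu := u.is_lt
    have hv := v.is_lt
    simp only [fB, nabs]
    omega

lemma broom_walk_le (m : ℕ) {u v : Fin (m + 4)} (w : (broom (m + 4)).Walk u v) :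
    nabs (fB m u) (fB m v) ≤ w.length := by
  induction w with
  | nil => simp [nabs]
  | cons h p ih =>
      have h1 := broom_adj_lip m h
      rw [SimpleGraph.Walk.length_cons]
      simp only [nabs] at *
      omega

lemma broom_reachable_aux (m : ℕ) :
    ∀ k, ∀ v : Fin (m + 4), v.val ≤ k → (broom (m + 4)).Reachable v 0 := by
  intro k
  induction k with
  | zero =>
      intro v hv
      have : v = 0 := by
        apply Fin.ext; simpa using hv
      rw [this]
  | succ k ih =>
      intro v hv
      by_cases h0 : v.val = 0
      · have : v = 0 := Fin.ext (by simpa using h0)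
        rw [this]
      by_cases h3 : v.val ≤ m + 1
      · have hadj : (broom (m + 4)).Adj v (⟨v.val - 1, by omega⟩ : Fin (m + 4)) := by
          refine ⟨?_, Or.inr (Or.inl ⟨?_, ?_⟩)⟩
          · intro he
            have h5 : v.val = v.val - 1 := congrArg Fin.val he
            omega
          · show v.val - 1 + 1 = v.val
            omega
          · show v.val ≤ m + 4 - 3
            omega
        exact hadj.reachable.trans (ih _ (by show v.val - 1 ≤ k; omega))
      · have hvlt := v.is_lt
        have hadj : (broom (m + 4)).Adj v (⟨m + 1, by omega⟩ : Fin (m + 4)) := by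
          refine ⟨?_, Or.inr (Or.inr ⟨?_, ?_⟩)⟩
          · intro he
            have h5 : v.val = m + 1 := congrArg Fin.val he
            omega
          · show m + 1 = m + 4 - 3
            omega
          · show v.val = m + 4 - 2 ∨ v.val = m + 4 - 1
            omega
        exact hadj.reachable.trans (ih _ (by show m + 1 ≤ k; omega))

lemma broom_reachable (m : ℕ) (u v : Fin (m + 4)) : (broom (m + 4)).Reachable u v :=
  (broom_reachable_aux m u.val u le_rfl).trans (broom_reachable_aux m v.val v le_rfl).symm

lemma broom_dist_ge (m : ℕ) (u v : Fin (m + 4)) :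
    nabs (fB m u) (fB m v) ≤ (broom (m + 4)).dist u v := by
  obtain ⟨w, hw⟩ := (broom_reachable m u v).exists_walk_length_eq_dist
  rw [← hw]
  exact broom_walk_le m w

lemma broom_dist_pendants (m : ℕ) :
    2 ≤ (broom (m + 4)).dist ⟨m + 2, by omega⟩ ⟨m + 3, by omega⟩ := by
  set a : Fin (m + 4) := ⟨m + 2, by omega⟩
  set b : Fin (m + 4) := ⟨m + 3, by omega⟩
  have hne : a ≠ b := by
    intro h; have := congrArg Fin.val h; simp [a, b] at this
  have hnadj : ¬ (broom (m + 4)).Adj a b := by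
    simp only [broom, SimpleGraph.fromRel_adj]
    rintro ⟨-, h | h⟩ <;> simp [a, b] at h <;> try omega
  have h0 : 0 < (broom (m + 4)).dist a b :=
    (broom_reachable m a b).pos_dist_of_ne hne
  have h1 : (broom (m + 4)).dist a b ≠ 1 := by
    intro h; exact hnadj (SimpleGraph.dist_eq_one_iff_adj.mp h)
  omega

/-! ### Broom transmission sum lower bound -/

section BroomSum
variable (m : ℕ)

def av : Fin (m + 4) := ⟨m + 2, by omega⟩
def bv : Fin (m + 4) := ⟨m + 3, by omega⟩
def eB (u : Fin (m + 4)) : ℕ := if u = bv m then 1 else 0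
def dB (u : Fin (m + 4)) : ℕ := if u = bv m then 0 else 1
def bonus (u v : Fin (m + 4)) : ℕ :=
  (if u = av m ∧ v = bv m then 2 else 0) + (if u = bv m ∧ v = av m then 2 else 0)

lemma master (u v : Fin (m + 4)) :
    nabs u.val v.val + bonus m u v
      ≤ (broom (m + 4)).dist u v + (eB m u * dB m v + dB m u * eB m v) := by
  have h1 := broom_dist_ge m u v
  have h2 : 2 ≤ (broom (m + 4)).dist (av m) (bv m) := broom_dist_pendants m
  have h2' : 2 ≤ (broom (m + 4)).dist (bv m) (av m) := by
    rw [SimpleGraph.dist_comm]; exact h2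
  have hu := u.is_lt
  have hv := v.is_lt
  have hav : (av m).val = m + 2 := rfl
  have hbv : (bv m).val = m + 3 := rfl
  have hfu : fB m u = min u.val (m + 2) := rfl
  have hfv : fB m v = min v.val (m + 2) := rfl
  rw [hfu, hfv] at h1
  have hds : (broom (m + 4)).dist u v = (broom (m + 4)).dist v u :=
    SimpleGraph.dist_comm
  by_cases hsp1 : u = av m ∧ v = bv m
  · obtain ⟨rfl, rfl⟩ := hsp1
    simp only [bonus, eB, dB]
    split_ifs <;> simp only [nabs, Fin.ext_iff, hav, hbv] at * <;> omega
  by_cases hsp2 : u = bv m ∧ v = av m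
  · obtain ⟨rfl, rfl⟩ := hsp2
    simp only [bonus, eB, dB]
    split_ifs <;> simp only [nabs, Fin.ext_iff, hav, hbv] at * <;> omega
  simp only [bonus, eB, dB, if_neg hsp1, if_neg hsp2]
  have hval1 : ¬(u.val = m + 2 ∧ v.val = m + 3) := by
    intro hh; exact hsp1 ⟨Fin.ext (hh.1.trans hav.symm), Fin.ext (hh.2.trans hbv.symm)⟩
  have hval2 : ¬(u.val = m + 3 ∧ v.val = m + 2) := by
    intro hh; exact hsp2 ⟨Fin.ext (hh.1.trans hbv.symm), Fin.ext (hh.2.trans hav.symm)⟩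
  split_ifs <;> simp only [nabs, Fin.ext_iff, hav, hbv] at * <;> omega

lemma sum_eB : ∑ u : Fin (m + 4), eB m u = 1 := by
  simp [eB, Finset.sum_ite_eq']

lemma sum_dB : ∑ u : Fin (m + 4), dB m u = m + 3 := by
  have h1 : ∑ u : Fin (m + 4), (eB m u + dB m u) = m + 4 := by
    have : ∀ u : Fin (m + 4), eB m u + dB m u = 1 := by
      intro u; simp only [eB, dB]; by_cases h : u = bv m <;> simp [h]
    simp [this]
  have h2 := sum_eB m
  rw [Finset.sum_add_distrib] at h1
  omega

lemma sum_bonus : ∑ u : Fin (m + 4), ∑ v : Fin (m + 4), bonus m u v = 4 := by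
  have h1 : ∀ (x y : Fin (m + 4)),
      ∑ u : Fin (m + 4), ∑ v : Fin (m + 4), (if u = x ∧ v = y then 2 else 0) = 2 := by
    intro x y
    have hin : ∀ u : Fin (m + 4), ∑ v : Fin (m + 4), (if u = x ∧ v = y then 2 else 0)
        = if u = x then 2 else 0 := by
      intro u
      by_cases h : u = x
      · simp [h]
      · simp [h]
    rw [Finset.sum_congr rfl (fun u _ => hin u)]
    simp
  simp only [bonus, Finset.sum_add_distrib]
  rw [h1, h1]

lemma sum_E : ∑ u : Fin (m + 4), ∑ v : Fin (m + 4),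
    (eB m u * dB m v + dB m u * eB m v) = 2 * (m + 3) := by
  simp only [Finset.sum_add_distrib]
  rw [← Finset.sum_mul_sum, ← Finset.sum_mul_sum, sum_eB, sum_dB]
  ring

lemma nabs_sum : ∑ u : Fin (m + 4), ∑ v : Fin (m + 4), nabs u.val v.val = Aabs (m + 4) := by
  rw [Aabs, ← Fin.sum_univ_eq_sum_range (fun i => ∑ j ∈ range (m + 4), nabs i j) (m + 4)]
  apply Finset.sum_congr rfl
  intro u _
  rw [← Fin.sum_univ_eq_sum_range (fun j => nabs u.val j) (m + 4)]

lemma broom_sum_ge :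
    Aabs (m + 4) + 4 ≤ (∑ u : Fin (m + 4), ∑ v : Fin (m + 4), (broom (m + 4)).dist u v)
      + 2 * (m + 3) := by
  have h := Finset.sum_le_sum (fun (u : Fin (m + 4)) (_ : u ∈ univ) =>
    Finset.sum_le_sum (fun (v : Fin (m + 4)) (_ : v ∈ univ) => master m u v))
  simp only [Finset.sum_add_distrib] at h
  rw [nabs_sum, sum_bonus] at h
  have h2 := sum_E m
  simp only [Finset.sum_add_distrib] at h2
  omega

end BroomSum

/-! ### Basic properties of `Dalpha` -/

lemma transmission_nonneg (G : SimpleGraph V) (u : V) : 0 ≤ transmission G u := by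
  apply Finset.sum_nonneg
  intro v _
  positivity

lemma Dalpha_nonneg (G : SimpleGraph V) {α : ℝ} (hα0 : 0 ≤ α) (hα1 : α < 1) (i j : V) :
    0 ≤ Dalpha G α i j := by
  simp only [Dalpha, Matrix.add_apply, Matrix.smul_apply, smul_eq_mul, distMatrix,
    Matrix.diagonal_apply]
  have h1 : (0:ℝ) ≤ (G.dist i j : ℝ) := by positivity
  have h2 : (0:ℝ) ≤ 1 - α := by linarith
  by_cases h : i = j
  · rw [if_pos h]
    have := transmission_nonneg G i
    positivity
  · rw [if_neg h]
    positivity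

lemma Dalpha_rowsum (G : SimpleGraph V) (α : ℝ) (i : V) :
    ∑ j, Dalpha G α i j = transmission G i := by
  simp only [Dalpha, Matrix.add_apply, Matrix.smul_apply, smul_eq_mul, distMatrix,
    Matrix.diagonal_apply, Finset.sum_add_distrib]
  rw [← Finset.mul_sum, ← Finset.mul_sum]
  rw [Finset.sum_ite_eq univ i (fun _ => transmission G i)]
  simp only [Finset.mem_univ, if_true]
  have : ∑ j, (G.dist i j : ℝ) = transmission G i := rfl
  rw [this]
  ring

lemma Dalpha_herm (G : SimpleGraph V) (α : ℝ) : (Dalpha G α).IsHermitian := by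
  apply Matrix.ext
  intro i j
  simp only [Matrix.conjTranspose_apply, star_trivial, Dalpha, Matrix.add_apply,
    Matrix.smul_apply, smul_eq_mul, distMatrix, Matrix.diagonal_apply]
  rw [SimpleGraph.dist_comm]
  by_cases h : i = j
  · subst h; simp
  · rw [if_neg h, if_neg (fun hh => h hh.symm)]

/-! ### STATEMENT 19 -/

/-- for `n ≥ 4`, `μ_α(C_n) < μ_α(B_{n,3})`. -/
theorem muAlpha_cycle_lt_broom (n : ℕ) (hn : 4 ≤ n)
    (α : ℝ) (hα0 : 0 ≤ α) (hα1 : α < 1) :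
    muAlpha (SimpleGraph.cycleGraph n) α < muAlpha (broom n) α := by
  obtain ⟨m, rfl⟩ : ∃ m, n = m + 4 := ⟨n - 4, by omega⟩
  -- the nat total distance of the broom
  set sn : ℕ := ∑ u : Fin (m + 4), ∑ v : Fin (m + 4), (broom (m + 4)).dist u v with hsn
  have hkeyb : (m+4)*(m+4)*(m+4) < 4 * sn := key_broom m sn (broom_sum_ge m)
  have hkey : (m+4) * S (m+4) < sn := key_cycle m sn hkeyb
  -- transmissions of the broom are bounded by sn
  have hbrow : ∀ i : Fin (m + 4), transmission (broom (m + 4)) i ≤ (sn : ℝ) := by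
    intro i
    have h1 : transmission (broom (m + 4)) i
        = ((∑ v : Fin (m + 4), (broom (m + 4)).dist i v : ℕ) : ℝ) := by
      rw [transmission, Nat.cast_sum]
    rw [h1]
    have h2 : (∑ v : Fin (m + 4), (broom (m + 4)).dist i v) ≤ sn := by
      rw [hsn]
      exact Finset.single_le_sum (f := fun u => ∑ v : Fin (m + 4), (broom (m + 4)).dist u v)
        (fun u _ => Nat.zero_le _) (Finset.mem_univ i)
    exact_mod_cast h2
  -- upper bound for the cycle
  have hC : muAlpha (SimpleGraph.cycleGraph (m + 4)) α ≤ (S (m + 4) : ℝ) := by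
    apply Real.sSup_le
    · intro μ hμ
      apply spectrum_le_rowsum _ (Dalpha_nonneg _ hα0 hα1) _ hμ
      intro i
      rw [Dalpha_rowsum]
      have h1 : transmission (SimpleGraph.cycleGraph (m + 4)) i
          = ((∑ v : Fin (m + 4), (SimpleGraph.cycleGraph (m + 4)).dist i v : ℕ) : ℝ) := by
        rw [transmission, Nat.cast_sum]
      rw [h1]
      exact_mod_cast cycle_trans_le m i
    · positivity
  -- lower bound for the broom
  have hones : (fun (_ : Fin (m + 4)) => (1:ℝ)) ≠ 0 := by
    intro h
    have := congrFun h 0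
    norm_num at this
  have hxx : (fun (_ : Fin (m + 4)) => (1:ℝ)) ⬝ᵥ (fun _ => (1:ℝ)) = ((m + 4 : ℕ) : ℝ) := by
    simp [dotProduct]
  have hxAx : (fun (_ : Fin (m + 4)) => (1:ℝ)) ⬝ᵥ
      ((Dalpha (broom (m + 4)) α) *ᵥ (fun _ => (1:ℝ))) = (sn : ℝ) := by
    simp only [dotProduct, Matrix.mulVec, one_mul, mul_one]
    rw [Finset.sum_congr rfl (fun i _ => Dalpha_rowsum (broom (m + 4)) α i), hsn,
      Nat.cast_sum]
    exact Finset.sum_congr rfl fun i _ => by rw [transmission, Nat.cast_sum]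
  have hN0 : (0:ℝ) < ((m + 4 : ℕ) : ℝ) := by positivity
  obtain ⟨μ, hμmem, hμge⟩ := exists_spectrum_ge (Dalpha (broom (m + 4)) α)
      (Dalpha_herm _ _) (fun _ => (1:ℝ)) hones ((sn : ℝ) / ((m + 4 : ℕ) : ℝ))
      (by rw [hxx, hxAx, div_mul_cancel₀ _ (ne_of_gt hN0)])
  have hbdd : BddAbove (spectrum ℝ (Dalpha (broom (m + 4)) α)) := by
    refine ⟨(sn : ℝ), fun ν hν => ?_⟩
    apply spectrum_le_rowsum _ (Dalpha_nonneg _ hα0 hα1) _ hν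
    intro i
    rw [Dalpha_rowsum]
    exact hbrow i
  have hB : ((sn : ℝ) / ((m + 4 : ℕ) : ℝ)) ≤ muAlpha (broom (m + 4)) α :=
    le_trans hμge (le_csSup hbdd hμmem)
  have hmid : (S (m + 4) : ℝ) < (sn : ℝ) / ((m + 4 : ℕ) : ℝ) := by
    rw [lt_div_iff₀ hN0]
    have : (S (m + 4) : ℝ) * ((m + 4 : ℕ) : ℝ) = (((m + 4) * S (m + 4) : ℕ) : ℝ) := by
      push_cast; ring
    rw [this]
    exact_mod_cast hkey
  calc muAlpha (SimpleGraph.cycleGraph (m + 4)) α ≤ (S (m + 4) : ℝ) := hC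
  _ < (sn : ℝ) / ((m + 4 : ℕ) : ℝ) := hmid
  _ ≤ muAlpha (broom (m + 4)) α := hB

end DistAlpha
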